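/- arXiv:2008.05141 — 10 statements merged into one kernel-verified Lean document; each statement's English description precedes it below -/
import Mathlib

section
/- Let N be a positive integer, s, σ : Fin N → ℝ strictly positive, L real with 0 < L ≤ ∑ n, σ[n]. Let μ* be a minimizer of c(μ) = max_n μ[n]/s[n] over the feasible set {μ | ∑ μ[n] = L, 0 ≤ μ[n] ≤ σ[n]}, and let c* = c(μ*). Then for every index n, if μ*[n]/s[n] < c*, then μ*[n] = σ[n]. -/
/-!
If a machine `n` with spare capacity had ratio `μ n / s n` strictly below the maximum `c > 0`,
move the assignment a little towards `L • e_n`: `ν = (1 - t) • μ + t • Pi.single n L`.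
This keeps the total load `L`, scales every other ratio down to at most `(1 - t) c < c`, and for
small `t > 0` keeps machine `n` below both its capacity and the ratio `c`, contradicting optimality.
-/

open Finset Filter Topology

section

variable {ι : Type*} [Fintype ι] [DecidableEq ι]

def IsFeasibleLoad (σ : ι → ℝ) (L : ℝ) (μ : ι → ℝ) : Prop :=
  (∑ i, μ i = L) ∧ ∀ i, 0 ≤ μ i ∧ μ i ≤ σ i

lemma sum_smul_add_smul_single {μ : ι → ℝ} {L : ℝ} (hμ : ∑ i, μ i = L) (n : ι) (t : ℝ) :
    ∑ i, ((1 - t) • μ + t • Pi.single n L : ι → ℝ) i = L := by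
  simp only [Pi.add_apply, Pi.smul_apply, smul_eq_mul, sum_add_distrib, ← mul_sum, hμ,
    sum_pi_single', mem_univ, if_true]
  ring

lemma exists_isFeasibleLoad_ciSup_div_lt {s σ μ : ι → ℝ} {L : ℝ} {n : ι}
    (hμ : IsFeasibleLoad σ L μ) (hsn : 0 < s n) (hn : μ n / s n < ⨆ i, μ i / s i)
    (hσn : μ n < σ n) :
    ∃ ν, IsFeasibleLoad σ L ν ∧ (⨆ i, ν i / s i) < ⨆ i, μ i / s i := by
  set c := ⨆ i, μ i / s i
  have hc : 0 < c := (div_nonneg (hμ.2 n).1 hsn.le).trans_lt hn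
  have hL : 0 ≤ L := hμ.1 ▸ sum_nonneg fun i _ ↦ (hμ.2 i).1
  set g : ℝ → ℝ := fun t ↦ (1 - t) * μ n + t * L
  have hg : Tendsto g (𝓝[>] 0) (𝓝 (μ n)) :=
    ((by fun_prop : Continuous g).tendsto' 0 _ (by simp [g])).mono_left nhdsWithin_le_nhds
  have hgσ : ∀ᶠ t in 𝓝[>] 0, g t < σ n := hg.eventually (gt_mem_nhds hσn)
  have hgc : ∀ᶠ t in 𝓝[>] 0, g t / s n < c := (hg.div_const _).eventually (gt_mem_nhds hn)
  have hlt1 : ∀ᶠ t : ℝ in 𝓝[>] 0, t < 1 := nhdsWithin_le_nhds (gt_mem_nhds one_pos)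
  obtain ⟨t, ht, htσ, htc, ht1⟩ :=
    (eventually_mem_nhdsWithin.and (hgσ.and (hgc.and hlt1))).exists
  set ν : ι → ℝ := (1 - t) • μ + t • Pi.single n L
  have hνn : ν n = g t := by simp [ν, g]
  have hνi : ∀ i ≠ n, ν i = (1 - t) * μ i := fun i hi ↦ by simp [ν, hi]
  refine ⟨ν, ⟨sum_smul_add_smul_single hμ.1 n t, fun i ↦ ?_⟩, ?_⟩
  · rcases eq_or_ne i n with rfl | hi
    · rw [hνn]
      exact ⟨by nlinarith [ht.out, (hμ.2 i).1], htσ.le⟩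
    · rw [hνi i hi]
      have := hμ.2 i
      constructor <;> nlinarith [ht.out]
  · have : Nonempty ι := ⟨n⟩
    obtain ⟨i, hi⟩ := exists_eq_ciSup_of_finite (f := fun i ↦ ν i / s i)
    rw [← hi]
    rcases eq_or_ne i n with rfl | hin
    · rwa [hνn]
    · have hle : μ i / s i ≤ c := le_ciSup (f := fun i ↦ μ i / s i) (Finite.bddAbove_range _) i
      rw [hνi i hin, mul_div_assoc]
      nlinarith [ht.out]

end

theorem stmt1_general (N : ℕ) (s σ : Fin N → ℝ)
    (hs : ∀ n, 0 < s n) (L : ℝ)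
    (μstar : Fin N → ℝ)
    (hfeas : (∑ n, μstar n = L) ∧ ∀ n, 0 ≤ μstar n ∧ μstar n ≤ σ n)
    (hmin : ∀ ν : Fin N → ℝ, (∑ n, ν n = L) → (∀ n, 0 ≤ ν n ∧ ν n ≤ σ n) →
      (⨆ n, μstar n / s n) ≤ ⨆ n, ν n / s n) :
    ∀ n, μstar n / s n < (⨆ m, μstar m / s m) → μstar n = σ n := by
  intro n hn
  by_contra hne
  obtain ⟨ν, ⟨hνL, hνσ⟩, hν⟩ :=
    exists_isFeasibleLoad_ciSup_div_lt hfeas (hs n) hn (lt_of_le_of_ne (hfeas.2 n).2 hne)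
  exact (hmin ν hνL hνσ).not_gt hν

theorem stmt1 (N : ℕ) (hN : 0 < N) (s σ : Fin N → ℝ)
    (hs : ∀ n, 0 < s n) (hσ : ∀ n, 0 < σ n) (L : ℝ)
    (hL : 0 < L) (hL2 : L ≤ ∑ n, σ n)
    (μstar : Fin N → ℝ)
    (hfeas : (∑ n, μstar n = L) ∧ ∀ n, 0 ≤ μstar n ∧ μstar n ≤ σ n)
    (hmin : ∀ ν : Fin N → ℝ, (∑ n, ν n = L) → (∀ n, 0 ≤ ν n ∧ ν n ≤ σ n) →
      (⨆ n, μstar n / s n) ≤ ⨆ n, ν n / s n) :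
    ∀ n, μstar n / s n < (⨆ m, μstar m / s m) → μstar n = σ n :=
  stmt1_general N s σ hs L μstar hfeas hmin
end

section
/- Let N be a positive integer, s, σ : Fin N → ℝ strictly positive, L real with 0 < L < ∑ n, σ[n]. Let μ* be a minimizer of c(μ) = max_n μ[n]/s[n] over {μ | ∑ μ[n] = L, 0 ≤ μ[n] ≤ σ[n]} with optimal value c*. If indices j and i satisfy μ*[j] = c* · s[j] and μ*[i] < c* · s[i], then σ[j]/s[j] > σ[i]/s[i]. -/
open Finset

theorem stmt2 (N : ℕ) (hN : 0 < N) (s σ : Fin N → ℝ)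
    (hs : ∀ n, 0 < s n) (hσ : ∀ n, 0 < σ n) (L : ℝ)
    (hL : 0 < L) (hL2 : L < ∑ n, σ n)
    (μstar : Fin N → ℝ)
    (hfeas : (∑ n, μstar n = L) ∧ ∀ n, 0 ≤ μstar n ∧ μstar n ≤ σ n)
    (hmin : ∀ ν : Fin N → ℝ, (∑ n, ν n = L) → (∀ n, 0 ≤ ν n ∧ ν n ≤ σ n) →
      (⨆ n, μstar n / s n) ≤ ⨆ n, ν n / s n)
    (cstar : ℝ) (hc : cstar = ⨆ n, μstar n / s n)
    (j i : Fin N) (hj : μstar j = cstar * s j) (hi : μstar i < cstar * s i) :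
    σ j / s j > σ i / s i := by
  classical
  haveI : Nonempty (Fin N) := ⟨⟨0, hN⟩⟩
  obtain ⟨hsum, hbnd⟩ := hfeas
  have hbdd : ∀ f : Fin N → ℝ, BddAbove (Set.range f) :=
    fun f => (Set.finite_range f).bddAbove
  have hle : ∀ n, μstar n / s n ≤ cstar := by
    intro n; rw [hc]; exact le_ciSup (hbdd (fun n => μstar n / s n)) n
  have hcpos : 0 < cstar := by
    obtain ⟨k, hk⟩ : ∃ k, 0 < μstar k := by
      by_contra h
      push_neg at h
      have h2 : (∑ n, μstar n) ≤ 0 := Finset.sum_nonpos (fun n _ => h n)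
      rw [hsum] at h2; linarith
    have h1 := hle k
    have h2 : 0 < μstar k / s k := div_pos hk (hs k)
    linarith
  -- Claim 1: μstar i = σ i
  have hsat : μstar i = σ i := by
    by_contra hne
    have hlt : μstar i < σ i := lt_of_le_of_ne (hbnd i).2 hne
    set A : Finset (Fin N) := Finset.univ.filter (fun n => μstar n = cstar * s n) with hA
    have hjA : j ∈ A := by simp [hA, hj]
    have hiA : i ∉ A := by
      simp only [hA, Finset.mem_filter, Finset.mem_univ, true_and]
      exact ne_of_lt hi
    have hmemA : ∀ n ∈ A, μstar n = cstar * s n := by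
      intro n hn; exact (Finset.mem_filter.mp hn).2
    have hnotA : ∀ n, n ∉ A → μstar n / s n < cstar := by
      intro n hn
      rcases lt_or_eq_of_le (hle n) with h | h
      · exact h
      · exfalso
        apply hn
        simp only [hA, Finset.mem_filter, Finset.mem_univ, true_and]
        rw [div_eq_iff (ne_of_gt (hs n))] at h
        exact h
    set S : ℝ := ∑ n ∈ A, s n with hSdef
    have hS : 0 < S := Finset.sum_pos (fun n _ => hs n) ⟨j, hjA⟩
    set δ : ℝ := min (min ((σ i - μstar i) / S) ((cstar * s i - μstar i) / (2 * S))) cstar with hδdef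
    have hδ1 : δ ≤ (σ i - μstar i) / S := le_trans (min_le_left _ _) (min_le_left _ _)
    have hδ2 : δ ≤ (cstar * s i - μstar i) / (2 * S) := le_trans (min_le_left _ _) (min_le_right _ _)
    have hδ3 : δ ≤ cstar := min_le_right _ _
    have hδpos : 0 < δ := by
      apply lt_min (lt_min _ _) hcpos
      · exact div_pos (by linarith) hS
      · exact div_pos (by linarith) (by linarith)
    set ν : Fin N → ℝ := fun n =>
      μstar n - (if n ∈ A then δ * s n else 0) + (if n = i then δ * S else 0) with hν
    have hsumν : ∑ n, ν n = L := by
      simp only [hν, Finset.sum_add_distrib, Finset.sum_sub_distrib]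
      rw [Finset.sum_ite_eq' Finset.univ i (fun _ => δ * S)]
      rw [Finset.sum_ite_mem, Finset.univ_inter, ← Finset.mul_sum, ← hSdef]
      simp [hsum]
    have hfeasν : ∀ n, 0 ≤ ν n ∧ ν n ≤ σ n := by
      intro n
      by_cases hnA : n ∈ A
      · have hni : n ≠ i := fun h => hiA (h ▸ hnA)
        have hμn := hmemA n hnA
        simp only [hν, hnA, if_true, hni, if_false, add_zero]
        constructor
        · rw [hμn]
          nlinarith [hs n]
        · nlinarith [hs n, (hbnd n).2]
      · by_cases hni : n = i
        · subst hni
          simp only [hν, hnA, if_false, if_true, sub_zero]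
          constructor
          · nlinarith [(hbnd n).1]
          · have : δ * S ≤ σ n - μstar n := (le_div_iff₀ hS).mp hδ1
            linarith
        · simp only [hν, hnA, if_false, hni, sub_zero, add_zero]
          exact hbnd n
    obtain ⟨m', hm'⟩ := Finite.exists_max (fun n => ν n / s n)
    have hsupν : (⨆ n, ν n / s n) = ν m' / s m' :=
      le_antisymm (ciSup_le hm') (le_ciSup (hbdd (fun n => ν n / s n)) m')
    have hlt2 : ν m' / s m' < cstar := by
      by_cases hmA : m' ∈ A
      · have hmi : m' ≠ i := fun h => hiA (h ▸ hmA)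
        have hμm := hmemA m' hmA
        simp only [hν, hmA, if_true, hmi, if_false, add_zero]
        rw [hμm, div_lt_iff₀ (hs m')]
        nlinarith [hs m']
      · by_cases hmi : m' = i
        · subst hmi
          simp only [hν, hmA, if_false, if_true, sub_zero]
          rw [div_lt_iff₀ (hs m')]
          have h2S : (0:ℝ) < 2 * S := by linarith
          have h2 : δ * (2 * S) ≤ cstar * s m' - μstar m' := (le_div_iff₀ h2S).mp hδ2
          have hδS : 0 < δ * S := mul_pos hδpos hS
          linarith
        · simp only [hν, hmA, if_false, hmi, sub_zero, add_zero]
          exact hnotA m' hmA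
    have := hmin ν hsumν hfeasν
    rw [← hc, hsupν] at this
    linarith
  -- Conclude
  have h1 : σ i / s i < cstar := by
    rw [← hsat, div_lt_iff₀ (hs i)]
    linarith [hi]
  have h2 : cstar ≤ σ j / s j := by
    rw [le_div_iff₀ (hs j)]
    have := (hbnd j).2
    linarith [hj ▸ this]
  linarith
end

section
/- Let N be a positive integer, s, σ : Fin N → ℝ strictly positive with σ[1]/s[1] ≥ σ[2]/s[2] ≥ ... ≥ σ[N]/s[N], and let L be real with 0 < L < ∑ n, σ[n]. Suppose k ∈ {1,...,N} and c = (L − ∑_{n=k+1}^{N} σ[n]) / (∑_{n=1}^{k} s[n]) satisfy: c ≤ σ[k]/s[k], and (if k < N) σ[k+1]/s[k+1] < c, and c > 0. Define μ[n] = c·s[n] for n ≤ k and μ[n] = σ[n] for n > k. Then μ is feasible (∑ μ[n] = L and 0 ≤ μ[n] ≤ σ[n] for all n) and μ minimizes max_n μ[n]/s[n] over all feasible vectors, with optimal value c. -/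
/-!
If `M = max ν n / s n` for a feasible load `ν`, then `ν ≤ M s` on the first `k` machines and
`ν ≤ σ` on the others, so `L ≤ M · ∑_{n ≤ k} s n + ∑_{n > k} σ n`; by the choice of `c` the same
total equals `c · ∑_{n ≤ k} s n + ∑_{n > k} σ n`, hence `c ≤ M`. The load `μ` attains this bound:
by the sorting, `c ≤ σ k / s k ≤ σ n / s n` for `n ≤ k` (so `μ` respects the storage), while
`σ n / s n ≤ σ (k+1) / s (k+1) < c` for `n > k`.
-/

open Finset

section FillLoad

variable {ι : Type*} {s σ : ι → ℝ} {p : ι → Prop} [DecidablePred p] {c : ℝ}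

/-- Machines satisfying `p` run at the common time `c`, the others are filled to capacity. -/
def fillLoad (s σ : ι → ℝ) (p : ι → Prop) [DecidablePred p] (c : ℝ) (i : ι) : ℝ :=
  if p i then c * s i else σ i

theorem sum_fillLoad [Fintype ι] :
    ∑ i, fillLoad s σ p c i = c * ∑ i ∈ univ.filter p, s i + ∑ i ∈ univ.filter (¬p ·), σ i := by
  simp only [fillLoad]
  rw [sum_ite, mul_sum]

theorem fillLoad_nonneg (hs : ∀ i, 0 ≤ s i) (hσ : ∀ i, 0 ≤ σ i) (hc : 0 ≤ c) (i : ι) :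
    0 ≤ fillLoad s σ p c i := by
  unfold fillLoad
  split_ifs
  · exact mul_nonneg hc (hs i)
  · exact hσ i

theorem fillLoad_le (hs : ∀ i, 0 < s i) (hp : ∀ i, p i → c ≤ σ i / s i) (i : ι) :
    fillLoad s σ p c i ≤ σ i := by
  unfold fillLoad
  split_ifs with h
  · exact (le_div_iff₀ (hs i)).1 (hp i h)
  · exact le_rfl

theorem fillLoad_div_of_pos {i : ι} (hs : s i ≠ 0) (h : p i) : fillLoad s σ p c i / s i = c := by
  rw [fillLoad, if_pos h, mul_div_cancel_right₀ c hs]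

theorem fillLoad_div_le (hs : ∀ i, 0 < s i) (hnp : ∀ i, ¬p i → σ i / s i ≤ c) (i : ι) :
    fillLoad s σ p c i / s i ≤ c := by
  by_cases h : p i
  · exact (fillLoad_div_of_pos (hs i).ne' h).le
  · rw [fillLoad, if_neg h]
    exact hnp i h

theorem iSup_fillLoad_div [Finite ι] (hs : ∀ i, 0 < s i) (hnp : ∀ i, ¬p i → σ i / s i ≤ c)
    {i₀ : ι} (hi₀ : p i₀) : ⨆ i, fillLoad s σ p c i / s i = c := by
  have : Nonempty ι := ⟨i₀⟩
  refine le_antisymm (ciSup_le (fillLoad_div_le hs hnp)) ?_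
  calc c = fillLoad s σ p c i₀ / s i₀ := (fillLoad_div_of_pos (hs i₀).ne' hi₀).symm
    _ ≤ ⨆ i, fillLoad s σ p c i / s i :=
      le_ciSup (f := fun i => fillLoad s σ p c i / s i) (Set.finite_range _).bddAbove i₀

theorem sum_le_iSup_div_mul_add [Fintype ι] (hs : ∀ i, 0 < s i) {ν : ι → ℝ}
    (hν : ∀ i, ¬p i → ν i ≤ σ i) :
    ∑ i, ν i ≤
      (⨆ i, ν i / s i) * ∑ i ∈ univ.filter p, s i + ∑ i ∈ univ.filter (¬p ·), σ i := by
  rw [← sum_filter_add_sum_filter_not univ p, mul_sum]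
  gcongr with i _ i hi
  · exact (div_le_iff₀ (hs i)).1 (le_ciSup (f := fun i => ν i / s i) (Set.finite_range _).bddAbove i)
  · exact hν i (mem_filter.1 hi).2

theorem le_iSup_div_of_sum_eq_sum_fillLoad [Fintype ι] (hs : ∀ i, 0 < s i)
    (hp : 0 < ∑ i ∈ univ.filter p, s i) {ν : ι → ℝ} (hν : ∑ i, ν i = ∑ i, fillLoad s σ p c i)
    (hνσ : ∀ i, ν i ≤ σ i) : c ≤ ⨆ i, ν i / s i := by
  have h := sum_le_iSup_div_mul_add hs (p := p) (fun i _ => hνσ i)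
  rw [hν, sum_fillLoad] at h
  exact le_of_mul_le_mul_right (by linarith) hp

end FillLoad

theorem Antitone.apply_lt_of_apply_succ_lt {α : Type*} [Preorder α] {N : ℕ} {r : Fin N → α}
    (hr : Antitone r) {k n : Fin N} {c : α} (hk : ∀ m : Fin N, (m : ℕ) = k + 1 → r m < c)
    (hn : k < n) : r n < c :=
  (hr (show (⟨k + 1, lt_of_le_of_lt hn n.isLt⟩ : Fin N) ≤ n from hn)).trans_lt (hk _ rfl)

theorem stmt3_general (N : ℕ) (s σ : Fin N → ℝ)
    (hs : ∀ n, 0 < s n) (hσ : ∀ n, 0 < σ n)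
    (hsort : ∀ m n : Fin N, m ≤ n → σ n / s n ≤ σ m / s m)
    (L : ℝ)
    (k : Fin N) (c : ℝ)
    (hc : c = (L - ∑ n ∈ univ.filter (fun n => k < n), σ n) /
              (∑ n ∈ univ.filter (fun n => n ≤ k), s n))
    (hcpos : 0 < c)
    (hck : c ≤ σ k / s k)
    (hck1 : ∀ n : Fin N, (n : ℕ) = (k : ℕ) + 1 → σ n / s n < c)
    (μ : Fin N → ℝ) (hμ : ∀ n, μ n = if n ≤ k then c * s n else σ n) :
    (∑ n, μ n = L) ∧ (∀ n, 0 ≤ μ n ∧ μ n ≤ σ n) ∧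
    (⨆ n, μ n / s n) = c ∧
    (∀ ν : Fin N → ℝ, (∑ n, ν n = L) → (∀ n, 0 ≤ ν n ∧ ν n ≤ σ n) →
      c ≤ ⨆ n, ν n / s n) := by
  obtain rfl : μ = fillLoad s σ (· ≤ k) c := funext hμ
  have hr : Antitone fun n => σ n / s n := fun m n h => hsort m n h
  have hlow : ∀ n, n ≤ k → c ≤ σ n / s n := fun n hn => hck.trans (hr hn)
  have hhigh : ∀ n, ¬n ≤ k → σ n / s n ≤ c := fun n hn =>
    (hr.apply_lt_of_apply_succ_lt hck1 (not_le.1 hn)).le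
  have hA : 0 < ∑ n ∈ univ.filter (· ≤ k), s n := sum_pos (fun n _ => hs n) ⟨k, by simp⟩
  have hsum : ∑ n, fillLoad s σ (· ≤ k) c n = L := by
    rw [sum_fillLoad, hc, div_mul_cancel₀ _ hA.ne']
    simp only [not_le]
    ring
  refine ⟨hsum, fun n => ⟨fillLoad_nonneg (fun i => (hs i).le) (fun i => (hσ i).le) hcpos.le n,
    fillLoad_le hs hlow n⟩, iSup_fillLoad_div hs hhigh le_rfl, ?_⟩
  intro ν hν hνσ
  exact le_iSup_div_of_sum_eq_sum_fillLoad hs hA (hν.trans hsum.symm) (fun n => (hνσ n).2)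

theorem stmt3 (N : ℕ) (s σ : Fin N → ℝ)
    (hs : ∀ n, 0 < s n) (hσ : ∀ n, 0 < σ n)
    (hsort : ∀ m n : Fin N, m ≤ n → σ n / s n ≤ σ m / s m)
    (L : ℝ) (hL : 0 < L) (hL2 : L < ∑ n, σ n)
    (k : Fin N) (c : ℝ)
    (hc : c = (L - ∑ n ∈ univ.filter (fun n => k < n), σ n) /
              (∑ n ∈ univ.filter (fun n => n ≤ k), s n))
    (hcpos : 0 < c)
    (hck : c ≤ σ k / s k)
    (hck1 : ∀ n : Fin N, (n : ℕ) = (k : ℕ) + 1 → σ n / s n < c)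
    (μ : Fin N → ℝ) (hμ : ∀ n, μ n = if n ≤ k then c * s n else σ n) :
    (∑ n, μ n = L) ∧ (∀ n, 0 ≤ μ n ∧ μ n ≤ σ n) ∧
    (⨆ n, μ n / s n) = c ∧
    (∀ ν : Fin N → ℝ, (∑ n, ν n = L) → (∀ n, 0 ≤ ν n ∧ ν n ≤ σ n) →
      c ≤ ⨆ n, ν n / s n) :=
  stmt3_general N s σ hs hσ hsort L k c hc hcpos hck hck1 μ hμ
end

section
/- Let N be a positive integer, s, σ : Fin N → ℝ strictly positive sorted so that σ[n]/s[n] is nonincreasing in n, and 0 < L < ∑ n, σ[n]. For k ∈ {1,...,N} define c_k = (L − ∑_{n=k+1}^{N} σ[n]) / (∑_{n=1}^{k} s[n]). Then for any i with 2 ≤ i ≤ N: if c_i > σ[i]/s[i], then σ[i]/s[i] < c_{i−1}. -/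
open Finset

/-- `x / (B + b)` is the mediant of `a / b` and `(x - a) / B`, so it lies between them. -/
theorem div_lt_sub_div_of_div_lt_div_add {K : Type*} [Field K] [LinearOrder K]
    [IsStrictOrderedRing K]
    {a b x B : K} (hb : 0 < b) (hB : 0 < B) (h : a / b < x / (B + b)) :
    a / b < (x - a) / B := by
  rw [div_lt_div_iff₀ hb (by positivity)] at h
  rw [div_lt_div_iff₀ hb hB]
  linarith

section FinFilterSums

variable {N : ℕ} {M : Type*} [AddCommMonoid M]

theorem sum_filter_lt_succ_eq (f : Fin N → M) {n : Fin N} {k : ℕ} (hn : (n : ℕ) = k) :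
    ∑ m ∈ univ.filter (fun m : Fin N => (m : ℕ) < k + 1), f m =
      ∑ m ∈ univ.filter (fun m : Fin N => (m : ℕ) < k), f m + f n := by
  have hsplit : univ.filter (fun m : Fin N => (m : ℕ) < k + 1) =
      insert n (univ.filter (fun m : Fin N => (m : ℕ) < k)) := by
    ext m; simp only [mem_filter, mem_univ, true_and, mem_insert, Fin.ext_iff, hn]; omega
  rw [hsplit, sum_insert (by simp [hn]), add_comm]

theorem sum_filter_le_eq (f : Fin N → M) {n : Fin N} {k : ℕ} (hn : (n : ℕ) = k) :
    ∑ m ∈ univ.filter (fun m : Fin N => k ≤ (m : ℕ)), f m =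
      ∑ m ∈ univ.filter (fun m : Fin N => k + 1 ≤ (m : ℕ)), f m + f n := by
  have hsplit : univ.filter (fun m : Fin N => k ≤ (m : ℕ)) =
      insert n (univ.filter (fun m : Fin N => k + 1 ≤ (m : ℕ))) := by
    ext m; simp only [mem_filter, mem_univ, true_and, mem_insert, Fin.ext_iff, hn]; omega
  rw [hsplit, sum_insert (by simp [hn]), add_comm]

theorem sum_filter_lt_pos [PartialOrder M] [IsOrderedCancelAddMonoid M] {f : Fin N → M}
    (hf : ∀ n, 0 < f n) {k : ℕ} (hk : 0 < k) (hkN : k ≤ N) :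
    0 < ∑ m ∈ univ.filter (fun m : Fin N => (m : ℕ) < k), f m :=
  sum_pos (fun m _ => hf m) ⟨⟨0, by omega⟩, by simpa using hk⟩

end FinFilterSums

theorem stmt4_general (N : ℕ) (s σ : Fin N → ℝ)
    (hs : ∀ n, 0 < s n)
    (L : ℝ)
    (c : ℕ → ℝ)
    (hc : ∀ k : ℕ, c k = (L - ∑ n ∈ univ.filter (fun n : Fin N => k ≤ (n : ℕ)), σ n) /
                        (∑ n ∈ univ.filter (fun n : Fin N => (n : ℕ) < k), s n)) :
    ∀ i : ℕ, 2 ≤ i → i ≤ N →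
      ∀ n : Fin N, (n : ℕ) = i - 1 →
        (σ n / s n < c i → σ n / s n < c (i - 1)) := by
  intro i hi2 hiN n hn hlt
  obtain ⟨k, rfl⟩ : ∃ k, i = k + 1 := ⟨i - 1, by omega⟩
  rw [Nat.add_sub_cancel] at hn ⊢
  rw [hc, sum_filter_lt_succ_eq s hn] at hlt
  rw [hc, sum_filter_le_eq σ hn, ← sub_sub]
  exact div_lt_sub_div_of_div_lt_div_add (hs n) (sum_filter_lt_pos hs (by omega) (by omega)) hlt

theorem stmt4 (N : ℕ) (hN : 0 < N) (s σ : Fin N → ℝ)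
    (hs : ∀ n, 0 < s n) (hσ : ∀ n, 0 < σ n)
    (hsort : ∀ m n : Fin N, m ≤ n → σ n / s n ≤ σ m / s m)
    (L : ℝ) (hL : 0 < L) (hL2 : L < ∑ n, σ n)
    (c : ℕ → ℝ)
    (hc : ∀ k : ℕ, c k = (L - ∑ n ∈ univ.filter (fun n : Fin N => k ≤ (n : ℕ)), σ n) /
                        (∑ n ∈ univ.filter (fun n : Fin N => (n : ℕ) < k), s n)) :
    ∀ i : ℕ, 2 ≤ i → i ≤ N →
      ∀ n : Fin N, (n : ℕ) = i - 1 →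
        (σ n / s n < c i → σ n / s n < c (i - 1)) :=
  stmt4_general N s σ hs L c hc
end

section
/- Let N be a positive integer, s, σ : Fin N → ℝ strictly positive sorted so that σ[n]/s[n] is nonincreasing, and 0 < L < ∑ n, σ[n]. Define c_k = (L − ∑_{n=k+1}^{N} σ[n]) / (∑_{n=1}^{k} s[n]) for k ∈ {1,...,N}. Then there exists k* ∈ {1,...,N} such that c_{k*} ≤ σ[k*]/s[k*], and either k* = N or σ[k*+1]/s[k*+1] < c_{k*}. -/
/-!
Take the largest `k ≤ N` with `c_k ≤ σ[k]/s[k]`; `k = 1` qualifies because `L < ∑ σ`.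
If `k < N`, maximality gives `σ[k+1]/s[k+1] < c_{k+1}`, and `c_{k+1}` is the mediant of `c_k`
and `σ[k+1]/s[k+1]`, so `σ[k+1]/s[k+1] < c_k` as well.
-/

open Finset

theorem div_lt_div_of_div_lt_mediant {K : Type*} [Field K] [LinearOrder K] [IsStrictOrderedRing K]
    {a b u v : K} (hu : 0 < u) (hv : 0 < v) (h : b / v < (a + b) / (u + v)) : b / v < a / u := by
  rw [div_lt_div_iff₀ hv (add_pos hu hv)] at h
  rw [div_lt_div_iff₀ hv hu]
  linarith

namespace Fin

variable {M : Type*} [AddCommMonoid M] {N : ℕ}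

theorem sum_filter_val_ge_eq_add (f : Fin N → M) (i : Fin N) :
    ∑ n ∈ univ.filter (fun n : Fin N => (i : ℕ) ≤ n), f n
      = f i + ∑ n ∈ univ.filter (fun n : Fin N => (i : ℕ) + 1 ≤ n), f n := by
  rw [← sum_insert (by simp)]
  congr 1
  ext n
  simp only [mem_filter, mem_univ, true_and, mem_insert, Fin.ext_iff]
  omega

theorem sum_filter_val_lt_succ (f : Fin N → M) (i : Fin N) :
    ∑ n ∈ univ.filter (fun n : Fin N => (n : ℕ) < i + 1), f n
      = ∑ n ∈ univ.filter (fun n : Fin N => (n : ℕ) < i), f n + f i := by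
  rw [← add_comm (f i), ← sum_insert (by simp)]
  congr 1
  ext n
  simp only [mem_filter, mem_univ, true_and, mem_insert, Fin.ext_iff]
  omega

end Fin

section Threshold

variable {N : ℕ} (s σ : Fin N → ℝ) (L : ℝ)

/-- The paper's `c_k`, with `Fin N` indexed from `0`: the tail sum runs over `n ≥ k`. -/
noncomputable def thresholdRatio (k : ℕ) : ℝ :=
  (L - ∑ n ∈ univ.filter (fun n : Fin N => k ≤ (n : ℕ)), σ n) /
    (∑ n ∈ univ.filter (fun n : Fin N => (n : ℕ) < k), s n)

variable {s σ L}

theorem thresholdRatio_one_le (i : Fin N) (hi : (i : ℕ) = 0) (hs : 0 < s i)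
    (hL : L < ∑ n, σ n) : thresholdRatio s σ L 1 ≤ σ i / s i := by
  have htail := Fin.sum_filter_val_ge_eq_add σ i
  have hhead := Fin.sum_filter_val_lt_succ s i
  simp only [hi, zero_le, filter_true, not_lt_zero, filter_false, sum_empty, zero_add] at htail hhead
  rw [thresholdRatio, hhead]
  gcongr
  linarith

theorem div_lt_thresholdRatio_of_lt_succ (hs : ∀ n, 0 < s n) (i : Fin N) (hi : 1 ≤ (i : ℕ))
    (h : σ i / s i < thresholdRatio s σ L (i + 1)) : σ i / s i < thresholdRatio s σ L i := by
  have hhead_pos : 0 < ∑ n ∈ univ.filter (fun n : Fin N => (n : ℕ) < i), s n :=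
    sum_pos (fun n _ => hs n) ⟨⟨0, by omega⟩, by simp only [mem_filter, mem_univ, true_and]; omega⟩
  rw [thresholdRatio, Fin.sum_filter_val_lt_succ s i] at h
  rw [thresholdRatio, Fin.sum_filter_val_ge_eq_add σ i]
  refine div_lt_div_of_div_lt_mediant hhead_pos (hs i) ?_
  rwa [add_comm (σ i), ← sub_sub, sub_add_cancel]

end Threshold

theorem stmt5_general (N : ℕ) (hN : 0 < N) (s σ : Fin N → ℝ)
    (hs : ∀ n, 0 < s n)
    (L : ℝ) (hL2 : L < ∑ n, σ n)
    (c : ℕ → ℝ)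
    (hc : ∀ k : ℕ, c k = (L - ∑ n ∈ univ.filter (fun n : Fin N => k ≤ (n : ℕ)), σ n) /
                        (∑ n ∈ univ.filter (fun n : Fin N => (n : ℕ) < k), s n)) :
    ∃ k : ℕ, 1 ≤ k ∧ k ≤ N ∧
      (∀ n : Fin N, (n : ℕ) = k - 1 → c k ≤ σ n / s n) ∧
      (k = N ∨ ∀ n : Fin N, (n : ℕ) = k → σ n / s n < c k) := by
  classical
  obtain rfl : c = thresholdRatio s σ L := funext hc
  set P : ℕ → Prop := fun k => ∀ n : Fin N, (n : ℕ) = k - 1 → thresholdRatio s σ L k ≤ σ n / s n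
  have hP1 : P 1 := fun n hn => thresholdRatio_one_le n hn (hs n) hL2
  set k := Nat.findGreatest P N
  refine ⟨k, Nat.le_findGreatest hN hP1, Nat.findGreatest_le N, Nat.findGreatest_spec hN hP1, ?_⟩
  refine (Nat.findGreatest_le N).eq_or_lt.imp id fun hkN n hn => ?_
  have hnext : ¬P (k + 1) := Nat.findGreatest_is_greatest (Nat.lt_succ_self k) hkN
  have hlt : σ n / s n < thresholdRatio s σ L (n + 1) := by
    rw [hn]
    exact not_le.mp fun hle => hnext fun m hm => (Fin.ext (by omega) : m = n) ▸ hle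
  rw [← hn]
  exact div_lt_thresholdRatio_of_lt_succ hs n (hn ▸ Nat.le_findGreatest hN hP1) hlt

theorem stmt5 (N : ℕ) (hN : 0 < N) (s σ : Fin N → ℝ)
    (hs : ∀ n, 0 < s n) (hσ : ∀ n, 0 < σ n)
    (hsort : ∀ m n : Fin N, m ≤ n → σ n / s n ≤ σ m / s m)
    (L : ℝ) (hL : 0 < L) (hL2 : L < ∑ n, σ n)
    (c : ℕ → ℝ)
    (hc : ∀ k : ℕ, c k = (L - ∑ n ∈ univ.filter (fun n : Fin N => k ≤ (n : ℕ)), σ n) /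
                        (∑ n ∈ univ.filter (fun n : Fin N => (n : ℕ) < k), s n)) :
    ∃ k : ℕ, 1 ≤ k ∧ k ≤ N ∧
      (∀ n : Fin N, (n : ℕ) = k - 1 → c k ≤ σ n / s n) ∧
      (k = N ∨ ∀ n : Fin N, (n : ℕ) = k → σ n / s n < c k) :=
  stmt5_general N hN s σ hs L hL2 c hc
end

section
/- Let N and L be positive integers with L ≤ N, and let μ : Fin N → ℝ with μ[n] ≥ 0 for all n and μ[n] ≤ (∑_i μ[i]) / L for every n. Then there exist F ≤ N, positive reals α_1,...,α_F with ∑_f α_f = (∑_n μ[n]) / L, and subsets P_1,...,P_F of Fin N each of cardinality exactly L, such that for every n, ∑_{f : n ∈ P_f} α_f = μ[n]. -/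
/-!
Algorithm 1 (filling): while more than `L` loads are positive, give weight `a` to the `L` machines
of largest load, with `a` as large as possible subject to keeping every load nonnegative and at
most the new average `T - a`. Then the smallest selected load drops to `0` or the largest
unselected one rises to the new average, so each step strictly shrinks the set of partially filled
machines (`0 < μ n < T`). Once at most `L` loads are positive they all equal `T` (or all vanish)
and form the last row set. As the total load is `L * T`, exactly one partially filled machine is
impossible, so at most `max 1 m ≤ N` row sets are used, `m` the initial number of partially
filled machines.
-/

open Finset

theorem exists_top_subset_of_le_card {α β : Type*} [DecidableEq α] [LinearOrder β]
    (f : α → β) {m : ℕ} {s : Finset α} (hm : m ≤ #s) :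
    ∃ t ⊆ s, #t = m ∧ ∀ x ∈ t, ∀ y ∈ s \ t, f y ≤ f x := by
  induction m with
  | zero => exact ⟨∅, empty_subset s, rfl, by simp⟩
  | succ m ih =>
    obtain ⟨t, hts, rfl, htop⟩ := ih (Nat.le_of_succ_le hm)
    obtain ⟨x, hx, hxmax⟩ := (s \ t).exists_max_image f
      (by rw [← card_pos, card_sdiff_of_subset hts]; omega)
    obtain ⟨hxs, hxt⟩ := mem_sdiff.mp hx
    refine ⟨insert x t, insert_subset hxs hts, card_insert_of_notMem hxt, ?_⟩
    intro z hz y hy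
    have hyt : y ∈ s \ t := sdiff_subset_sdiff (Subset.refl s) (subset_insert x t) hy
    rcases mem_insert.mp hz with rfl | hzt
    · exact hxmax y hyt
    · exact htop z hzt y hyt

section Filling

variable {ι : Type*} {L : ℕ} {μ : ι → ℝ} {T : ℝ}

structure IsFilling [DecidableEq ι] (L : ℕ) (μ : ι → ℝ) {F : ℕ} (α : Fin F → ℝ)
    (P : Fin F → Finset ι) : Prop where
  pos : ∀ f, 0 < α f
  card : ∀ f, #(P f) = L
  load : ∀ n, ∑ f with n ∈ P f, α f = μ n

theorem IsFilling.sum_mul_card [Fintype ι] [DecidableEq ι] {F : ℕ} {α : Fin F → ℝ}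
    {P : Fin F → Finset ι} (h : IsFilling L μ α P) : (∑ f, α f) * L = ∑ n, μ n := by
  calc (∑ f, α f) * L = ∑ f, ∑ _n ∈ P f, α f := by
        simp only [sum_mul, sum_const, h.card, nsmul_eq_mul, mul_comm]
    _ = ∑ n, ∑ f with n ∈ P f, α f := sum_comm' (by simp)
    _ = ∑ n, μ n := sum_congr rfl fun n _ => h.load n

theorem IsFilling.cons [DecidableEq ι] {F : ℕ} {α : Fin F → ℝ} {P : Fin F → Finset ι}
    {μ' : ι → ℝ} (h : IsFilling L μ' α P) {a : ℝ} (ha : 0 < a) {Q : Finset ι}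
    (hQ : #Q = L) (hμ : ∀ n, μ n = μ' n + if n ∈ Q then a else 0) :
    IsFilling L μ (Fin.cons a α : Fin (F + 1) → ℝ) (Fin.cons Q P) where
  pos := Fin.cases ha h.pos
  card := Fin.cases hQ h.card
  load n := by
    rw [sum_filter, Fin.sum_univ_succ, hμ, ← h.load, sum_filter, add_comm]
    simp only [Fin.cons_zero, Fin.cons_succ]

theorem isFilling_zero [DecidableEq ι] (L : ℕ) :
    IsFilling L (0 : ι → ℝ) (Fin.elim0 : Fin 0 → ℝ) Fin.elim0 where
  pos f := f.elim0
  card f := f.elim0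
  load _ := by simp

theorem isFilling_single [DecidableEq ι] {Q : Finset ι} (hQ : #Q = L) (hT : 0 < T) :
    IsFilling L (fun n => if n ∈ Q then T else 0) (fun _ : Fin 1 => T) (fun _ => Q) where
  pos _ := hT
  card _ := hQ
  load n := by by_cases hn : n ∈ Q <;> simp [hn]

variable [Fintype ι]

noncomputable def partiallyFilled (μ : ι → ℝ) (T : ℝ) : Finset ι :=
  {n | 0 < μ n ∧ μ n < T}

theorem partiallyFilled_sub_ite_subset [DecidableEq ι] (Q : Finset ι) {a : ℝ} (ha : 0 ≤ a) :
    partiallyFilled (fun n => μ n - if n ∈ Q then a else 0) (T - a) ⊆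
      partiallyFilled μ T := by
  intro n
  by_cases hn : n ∈ Q <;>
  · simp only [partiallyFilled, mem_filter, mem_univ, true_and, hn, if_true, if_false]
    intro h
    constructor <;> linarith

theorem card_partiallyFilled_ne_one (hμ : ∀ n, 0 ≤ μ n) (hle : ∀ n, μ n ≤ T)
    (hsum : ∑ n, μ n = L * T) : #(partiallyFilled μ T) ≠ 1 := by
  intro h
  obtain ⟨k, hk⟩ := card_eq_one.mp h
  have hkμ : 0 < μ k ∧ μ k < T := by simpa [partiallyFilled] using hk.ge (mem_singleton_self k)
  have hzero : ∀ n, n ≠ k → μ n ≠ T → μ n = 0 := by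
    intro n hnk hnT
    have : n ∉ partiallyFilled μ T := by simp [hk, hnk]
    simp only [partiallyFilled, mem_filter, mem_univ, true_and, not_and, not_lt] at this
    by_contra hn
    exact hnT (le_antisymm (hle n) (this ((hμ n).lt_of_ne' hn)))
  -- the lone partially filled load would be `(L - c) * T`, a multiple of `T` inside `(0, T)`
  set c := #({n | μ n = T} : Finset ι)
  have hsplit : L * T = c * T + μ k := by
    rw [← hsum, ← sum_filter_add_sum_filter_not univ (fun n => μ n = T),
      sum_congr rfl fun n hn => (mem_filter.mp hn).2, sum_const, nsmul_eq_mul,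
      sum_eq_single_of_mem k (by simpa using hkμ.2.ne)
        fun n hn hnk => hzero n hnk (mem_filter.mp hn).2]
  have hcL : (c : ℝ) < L := by nlinarith
  have hLc : (L : ℝ) < c + 1 := by nlinarith
  have : c < L := by exact_mod_cast hcL
  have : L < c + 1 := by exact_mod_cast hLc
  omega

variable [DecidableEq ι]

theorem exists_filling_of_card_pos_le (hμ : ∀ n, 0 ≤ μ n) (hle : ∀ n, μ n ≤ T)
    (hsum : ∑ n, μ n = L * T) (hcard : #({n | 0 < μ n} : Finset ι) ≤ L) :
    ∃ F ≤ 1, ∃ (α : Fin F → ℝ) (P : Fin F → Finset ι), IsFilling L μ α P := by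
  rcases le_or_gt T 0 with hT | hT
  · have : μ = 0 := funext fun n => le_antisymm ((hle n).trans hT) (hμ n)
    exact ⟨0, zero_le_one, _, _, this ▸ isFilling_zero L⟩
  set pos : Finset ι := {n | 0 < μ n}
  have hsum_pos : ∑ n ∈ pos, μ n = L * T :=
    hsum ▸ sum_filter_of_ne fun n _ hn => (hμ n).lt_of_ne' hn
  have hdefect : ∑ n ∈ pos, (T - μ n) = (#pos - L) * T := by
    rw [sum_sub_distrib, sum_const, nsmul_eq_mul, hsum_pos, sub_mul]
  have htight : ∀ n ∈ pos, μ n = T := by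
    have hnonpos : ∑ n ∈ pos, (T - μ n) ≤ 0 := by
      rw [hdefect]
      exact mul_nonpos_of_nonpos_of_nonneg (by simpa using hcard) hT.le
    intro n hn
    linarith [(sum_eq_zero_iff_of_nonneg fun n _ => sub_nonneg.mpr (hle n)).mp
      (le_antisymm hnonpos (sum_nonneg fun n _ => sub_nonneg.mpr (hle n))) n hn]
  have hcard_eq : #pos = L := by
    have : ((#pos : ℝ) - L) * T = 0 := by
      rw [← hdefect]; exact sum_eq_zero fun n hn => by rw [htight n hn, sub_self]
    exact_mod_cast sub_eq_zero.mp ((mul_eq_zero.mp this).resolve_right hT.ne')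
  refine ⟨1, le_rfl, fun _ => T, fun _ => pos, ?_⟩
  convert isFilling_single hcard_eq hT using 1
  funext n
  by_cases hn : n ∈ pos
  · simp [hn, htight n hn]
  · have : ¬ 0 < μ n := by simpa [pos] using hn
    simp [hn, le_antisymm (not_lt.mp this) (hμ n)]

theorem exists_top_and_next_of_lt_card (hμ : ∀ n, 0 ≤ μ n)
    (hsum : ∑ n, μ n = L * T) (hcard : L < #({n | 0 < μ n} : Finset ι)) :
    ∃ (Q : Finset ι) (k : ι), #Q = L ∧ k ∉ Q ∧ 0 < μ k ∧ μ k < T ∧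
      (∀ x ∈ Q, μ k ≤ μ x) ∧ ∀ y ∉ Q, μ y ≤ μ k := by
  obtain ⟨Q, -, hQ, htop⟩ := exists_top_subset_of_le_card μ
    (hcard.le.trans (card_le_univ _) |>.trans (card_univ (α := ι)).ge)
  obtain ⟨y, hy, hyQ⟩ : ∃ y, 0 < μ y ∧ y ∉ Q := by
    by_contra! h
    exact (card_le_card fun n hn => h n (mem_filter.mp hn).2).not_gt (hQ ▸ hcard)
  obtain ⟨k, hk, hkmax⟩ := (univ \ Q).exists_max_image μ ⟨y, by simpa using hyQ⟩
  have hkQ : k ∉ Q := (mem_sdiff.mp hk).2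
  have hout : ∀ y ∉ Q, μ y ≤ μ k := fun y hy => hkmax y (by simpa using hy)
  have hin : ∀ x ∈ Q, μ k ≤ μ x := fun x hx => htop x hx k (by simpa using hkQ)
  have hkpos : 0 < μ k := hy.trans_le (hout y hyQ)
  refine ⟨Q, k, hQ, hkQ, hkpos, ?_, hin, hout⟩
  by_contra! hTk
  have : (L + 1) * T ≤ L * T := by
    calc (L + 1) * T = ∑ _n ∈ insert k Q, T := by
          rw [sum_const, card_insert_of_notMem hkQ, hQ, nsmul_eq_mul]; push_cast; ring
      _ ≤ ∑ n ∈ insert k Q, μ n := sum_le_sum fun n hn => by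
          rcases mem_insert.mp hn with rfl | hn
          exacts [hTk, hTk.trans (hin n hn)]
      _ ≤ L * T := hsum ▸ sum_le_univ_sum_of_nonneg hμ
  nlinarith [single_le_sum (fun n _ => hμ n) (mem_univ k), L.cast_nonneg (α := ℝ)]

theorem exists_filling_step (hL : 0 < L) (hμ : ∀ n, 0 ≤ μ n) (hle : ∀ n, μ n ≤ T)
    (hsum : ∑ n, μ n = L * T) (hcard : L < #({n | 0 < μ n} : Finset ι)) :
    ∃ a > 0, ∃ Q : Finset ι, #Q = L ∧ ∃ μ' : ι → ℝ,
      (∀ n, μ n = μ' n + if n ∈ Q then a else 0) ∧ (∀ n, 0 ≤ μ' n) ∧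
      (∀ n, μ' n ≤ T - a) ∧ ∑ n, μ' n = L * (T - a) ∧
      partiallyFilled μ' (T - a) ⊂ partiallyFilled μ T := by
  obtain ⟨Q, k, hQ, hkQ, hk0, hkT, hin, hout⟩ := exists_top_and_next_of_lt_card hμ hsum hcard
  obtain ⟨j, hjQ, hjmin⟩ := Q.exists_min_image μ (card_pos.mp (hQ ▸ hL))
  -- the largest step keeping `μ'` nonnegative on `Q` and below the new average `T - a` off `Q`
  set a := min (μ j) (T - μ k)
  have ha0 : 0 < a := lt_min (hk0.trans_le (hin j hjQ)) (sub_pos.mpr hkT)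
  set μ' : ι → ℝ := fun n => μ n - if n ∈ Q then a else 0
  have hμ'Q : ∀ n ∈ Q, μ' n = μ n - a := fun n hn => by simp [μ', hn]
  have hμ'nQ : ∀ n ∉ Q, μ' n = μ n := fun n hn => by simp [μ', hn]
  refine ⟨a, ha0, Q, hQ, μ', fun n => by simp [μ'], fun n => ?_, fun n => ?_, ?_, ?_⟩
  · by_cases hn : n ∈ Q
    · rw [hμ'Q n hn]; linarith [hjmin n hn, min_le_left (μ j) (T - μ k)]
    · rw [hμ'nQ n hn]; exact hμ n
  · by_cases hn : n ∈ Q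
    · rw [hμ'Q n hn]; linarith [hle n]
    · rw [hμ'nQ n hn]; linarith [hout n hn, min_le_right (μ j) (T - μ k)]
  · simp only [μ', sum_sub_distrib, sum_ite_mem, univ_inter, sum_const, hQ, nsmul_eq_mul, hsum]
    ring
  · refine ssubset_iff_of_subset (partiallyFilled_sub_ite_subset Q ha0.le) |>.mpr ?_
    simp only [partiallyFilled, mem_filter, mem_univ, true_and, not_and, not_lt]
    rcases min_cases (μ j) (T - μ k) with ⟨hmin, hle'⟩ | ⟨hmin, hlt⟩
    · refine ⟨j, ⟨hk0.trans_le (hin j hjQ), by linarith⟩, fun h => ?_⟩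
      simp only [hjQ, if_true] at h
      linarith
    · refine ⟨k, ⟨hk0, hkT⟩, fun _ => ?_⟩
      simp only [hkQ, if_false]
      linarith

theorem exists_filling (hL : 0 < L) (hμ : ∀ n, 0 ≤ μ n) (hle : ∀ n, μ n ≤ T)
    (hsum : ∑ n, μ n = L * T) :
    ∃ F ≤ max 1 #(partiallyFilled μ T), ∃ (α : Fin F → ℝ) (P : Fin F → Finset ι),
      IsFilling L μ α P := by
  induction hm : #(partiallyFilled μ T) using Nat.strong_induction_on generalizing μ T with
  | _ m ih =>
    by_cases hcard : L < #({n | 0 < μ n} : Finset ι)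
    · obtain ⟨a, ha, Q, hQ, μ', hμ', hμ'0, hμ'le, hμ'sum, hsub⟩ :=
        exists_filling_step hL hμ hle hsum hcard
      have hlt : #(partiallyFilled μ' (T - a)) < m := hm ▸ card_lt_card hsub
      have hm1 : m ≠ 1 := hm ▸ card_partiallyFilled_ne_one hμ hle hsum
      obtain ⟨F, hF, α, P, hfill⟩ := ih _ hlt hμ'0 hμ'le hμ'sum rfl
      exact ⟨F + 1, by omega, _, _, hfill.cons ha hQ hμ'⟩
    · obtain ⟨F, hF, hfill⟩ := exists_filling_of_card_pos_le hμ hle hsum (not_lt.mp hcard)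
      exact ⟨F, hF.trans (le_max_left _ _), hfill⟩

end Filling

theorem stmt8_general (N L : ℕ) (hN : 0 < N) (hL : 0 < L)
    (μ : Fin N → ℝ) (hμ : ∀ n, 0 ≤ μ n)
    (hbound : ∀ n, μ n ≤ (∑ i, μ i) / L) :
    ∃ (F : ℕ), F ≤ N ∧
      ∃ (α : Fin F → ℝ) (P : Fin F → Finset (Fin N)),
        (∀ f, 0 < α f) ∧
        (∑ f, α f = (∑ n, μ n) / L) ∧
        (∀ f, (P f).card = L) ∧
        (∀ n, ∑ f ∈ univ.filter (fun f => n ∈ P f), α f = μ n) := by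
  have hLR : (L : ℝ) ≠ 0 := by positivity
  obtain ⟨F, hF, α, P, hfill⟩ :=
    exists_filling hL hμ hbound (mul_div_cancel₀ _ hLR).symm
  refine ⟨F, ?_, α, P, hfill.pos, ?_, hfill.card, hfill.load⟩
  · calc F ≤ max 1 #(partiallyFilled μ ((∑ i, μ i) / L)) := hF
      _ ≤ N := max_le hN (card_le_univ _ |>.trans (Fintype.card_fin N).le)
  · rw [eq_div_iff hLR, hfill.sum_mul_card]

theorem stmt8 (N L : ℕ) (hN : 0 < N) (hL : 0 < L) (hLN : L ≤ N)
    (μ : Fin N → ℝ) (hμ : ∀ n, 0 ≤ μ n)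
    (hbound : ∀ n, μ n ≤ (∑ i, μ i) / L) :
    ∃ (F : ℕ), F ≤ N ∧
      ∃ (α : Fin F → ℝ) (P : Fin F → Finset (Fin N)),
        (∀ f, 0 < α f) ∧
        (∑ f, α f = (∑ n, μ n) / L) ∧
        (∀ f, (P f).card = L) ∧
        (∀ n, ∑ f ∈ univ.filter (fun f => n ∈ P f), α f = μ n) :=
  stmt8_general N L hN hL μ hμ hbound
end

section
/- Let N, L be positive integers with L ≤ N, and let μ : Fin N → ℝ satisfy 0 ≤ μ[n] ≤ 1 for all n and ∑ n, μ[n] = L. Then there exist F ≤ N, positive reals α_1,...,α_F with ∑_f α_f = 1, and subsets P_1,...,P_F ⊆ Fin N with |P_f| = L for all f, such that for every machine n, ∑_{f : n ∈ P_f} α_f = μ[n]. -/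
/-!
Peel off one vertex at a time. Given `μ ∈ [0,1]^ι` with integral sum `L`, pick an `L`-set `P`
containing every coordinate equal to `1` and none equal to `0`, and write
`μ = a • 1_P + (1 - a) • ν` with `a` as large as keeps `ν` in the cube. Then `ν` again has sum `L`,
every integral coordinate of `μ` stays integral, and the coordinate at which `a` is attained becomes
integral. A point with integral sum never has exactly one fractional coordinate, so by induction a
point with `k` fractional coordinates is a convex combination of at most `max 1 k` indicators.
-/

open Finset

variable {ι : Type*} {L : ℕ} {μ : ι → ℝ} {P : Finset ι} {a : ℝ}

lemma sum_eq_card_filter_eq_one {s : Finset ι} (h : ∀ n ∈ s, μ n = 0 ∨ μ n = 1) :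
    ∑ n ∈ s, μ n = #(s.filter (μ · = 1)) := by
  rw [← sum_boole]
  refine sum_congr rfl fun n hn => ?_
  rcases h n hn with h | h <;> simp [h]

section DecidableEq

variable [DecidableEq ι]

def IsMixtureOfSubsets (L F : ℕ) (μ : ι → ℝ) : Prop :=
  ∃ (α : Fin F → ℝ) (P : Fin F → Finset ι),
    (∀ f, 0 < α f) ∧ (∑ f, α f = 1) ∧ (∀ f, (P f).card = L) ∧
      ∀ n, ∑ f ∈ univ.filter (fun f => n ∈ P f), α f = μ n

lemma IsMixtureOfSubsets.cons {F : ℕ} {ν : ι → ℝ} (hP : #P = L)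
    (ha0 : 0 < a) (ha1 : a < 1) (hν : IsMixtureOfSubsets L F ν)
    (hμν : ∀ n, μ n = (if n ∈ P then a else 0) + (1 - a) * ν n) :
    IsMixtureOfSubsets L (F + 1) μ := by
  obtain ⟨α, Q, hα, hαsum, hQ, hνQ⟩ := hν
  refine ⟨Fin.cons a fun f => (1 - a) * α f, Fin.cons P Q, ?_, ?_, ?_, fun n => ?_⟩
  · exact Fin.cases ha0 fun f => mul_pos (sub_pos.2 ha1) (hα f)
  · rw [Fin.sum_cons, ← mul_sum, hαsum, mul_one, add_sub_cancel]
  · exact Fin.cases hP hQ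
  · rw [hμν, ← hνQ, sum_filter, sum_filter, Fin.sum_univ_succ, mul_sum]
    simp only [Fin.cons_zero, Fin.cons_succ, mul_ite, mul_zero]

noncomputable def peel (P : Finset ι) (a : ℝ) (μ : ι → ℝ) (n : ι) : ℝ :=
  (μ n - if n ∈ P then a else 0) / (1 - a)

lemma eq_ite_add_peel (ha : a < 1) (n : ι) :
    μ n = (if n ∈ P then a else 0) + (1 - a) * peel P a μ n := by
  rw [peel, mul_div_cancel₀ _ (sub_pos.2 ha).ne', add_sub_cancel]

lemma peel_bounds (ha : a < 1) (hμ : ∀ n, 0 ≤ μ n ∧ μ n ≤ 1)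
    (haμ : ∀ n, a ≤ if n ∈ P then μ n else 1 - μ n) (n : ι) :
    0 ≤ peel P a μ n ∧ peel P a μ n ≤ 1 := by
  have h1a : 0 < 1 - a := sub_pos.2 ha
  rw [peel, div_le_one h1a]
  refine ⟨div_nonneg ?_ h1a.le, ?_⟩ <;>
    have := haμ n <;> have := hμ n <;> split_ifs at * <;> linarith

end DecidableEq

variable [Fintype ι]

noncomputable def fractionalCoords (μ : ι → ℝ) : Finset ι :=
  univ.filter fun n => μ n ≠ 0 ∧ μ n ≠ 1

lemma mem_fractionalCoords {n : ι} : n ∈ fractionalCoords μ ↔ μ n ≠ 0 ∧ μ n ≠ 1 := by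
  simp [fractionalCoords]

lemma notMem_fractionalCoords {n : ι} : n ∉ fractionalCoords μ ↔ μ n = 0 ∨ μ n = 1 := by
  simp [fractionalCoords, or_iff_not_imp_left]

lemma exists_card_eq_of_sum_eq (hμ : ∀ n, 0 ≤ μ n ∧ μ n ≤ 1) (hsum : ∑ n, μ n = L) :
    ∃ P : Finset ι, #P = L ∧ (∀ n, μ n = 1 → n ∈ P) ∧ ∀ n ∈ P, μ n ≠ 0 := by
  set S := univ.filter (μ · = 1)
  set T := univ.filter (μ · ≠ 0)
  have hST : S ⊆ T := fun n hn => by simp_all [S, T]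
  have hS : #S ≤ L := by
    have : (#S : ℝ) ≤ L := calc
      (#S : ℝ) = ∑ n ∈ S, μ n := by rw [sum_congr rfl fun n hn => (mem_filter.1 hn).2]; simp [S]
      _ ≤ ∑ n, μ n := sum_le_sum_of_subset_of_nonneg (subset_univ S) fun n _ _ => (hμ n).1
      _ = L := hsum
    exact_mod_cast this
  have hT : L ≤ #T := by
    have : (L : ℝ) ≤ #T := calc
      (L : ℝ) = ∑ n ∈ T, μ n := by rw [← hsum, sum_filter_ne_zero]
      _ ≤ ∑ n ∈ T, 1 := sum_le_sum fun n _ => (hμ n).2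
      _ = #T := by simp
    exact_mod_cast this
  obtain ⟨P, hSP, hPT, hP⟩ := exists_subsuperset_card_eq hST hS hT
  exact ⟨P, hP, fun n hn => hSP (by simp [S, hn]), fun n hn => by simpa [T] using hPT hn⟩

variable [DecidableEq ι]

lemma IsMixtureOfSubsets.of_forall_eq_zero_or_one (hsum : ∑ n, μ n = L)
    (h : ∀ n, μ n = 0 ∨ μ n = 1) : IsMixtureOfSubsets L 1 μ := by
  refine ⟨fun _ => 1, fun _ => univ.filter (μ · = 1), fun _ => one_pos, by simp, fun _ => ?_,
    fun n => ?_⟩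
  · exact_mod_cast (sum_eq_card_filter_eq_one fun n _ => h n).symm.trans hsum
  · rcases h n with h | h <;> simp [h]

lemma card_fractionalCoords_ne_one (hμ : ∀ n, 0 ≤ μ n ∧ μ n ≤ 1) (hsum : ∑ n, μ n = L) :
    #(fractionalCoords μ) ≠ 1 := by
  intro hone
  obtain ⟨n₀, h⟩ := card_eq_one.1 hone
  have hn₀ : μ n₀ ≠ 0 ∧ μ n₀ ≠ 1 := mem_fractionalCoords.1 (h ▸ mem_singleton_self n₀)
  have hrest : ∀ n ∈ univ.erase n₀, μ n = 0 ∨ μ n = 1 := fun n hn =>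
    notMem_fractionalCoords.1 (h ▸ by simpa using ne_of_mem_erase hn)
  have hsplit := add_sum_erase univ μ (mem_univ n₀)
  rw [hsum, sum_eq_card_filter_eq_one hrest] at hsplit
  -- `μ n₀` is the integer `L - c`, yet lies strictly between `0` and `1`
  set c := #((univ.erase n₀).filter (μ · = 1))
  have h0 : 0 < μ n₀ := (hμ n₀).1.lt_of_ne' hn₀.1
  have h1 : μ n₀ < 1 := (hμ n₀).2.lt_of_ne hn₀.2
  have hcL : c < L := by exact_mod_cast (by linarith : (c : ℝ) < L)
  have hLc : L < c + 1 := by exact_mod_cast (by linarith : (L : ℝ) < c + 1)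
  omega

lemma sum_peel (ha : a < 1) (hsum : ∑ n, μ n = L) (hP : #P = L) :
    ∑ n, peel P a μ n = L := by
  simp only [peel, ← sum_div, sum_sub_distrib, sum_ite_mem, univ_inter, sum_const, hP,
    hsum, nsmul_eq_mul]
  rw [div_eq_iff (sub_pos.2 ha).ne']
  ring

lemma fractionalCoords_peel_subset (ha : a < 1) (hP1 : ∀ n, μ n = 1 → n ∈ P)
    (hP0 : ∀ n ∈ P, μ n ≠ 0) : fractionalCoords (peel P a μ) ⊆ fractionalCoords μ := by
  intro n
  contrapose
  simp only [notMem_fractionalCoords, peel]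
  rintro (h | h)
  · simp [h, show n ∉ P from fun hn => hP0 n hn h]
  · simp [h, hP1 n h, div_self (sub_pos.2 ha).ne']

/-- `a` is the largest step keeping `peel P a μ` in the cube: the minimum of `μ` on `P` and of
`1 - μ` off `P`. The coordinate attaining it becomes integral. -/
lemma exists_fractionalCoords_peel_ssubset (hμ : ∀ n, 0 ≤ μ n ∧ μ n ≤ 1)
    (hP1 : ∀ n, μ n = 1 → n ∈ P) (hP0 : ∀ n ∈ P, μ n ≠ 0)
    (hfrac : (fractionalCoords μ).Nonempty) :
    ∃ a, 0 < a ∧ a < 1 ∧ (∀ n, a ≤ if n ∈ P then μ n else 1 - μ n) ∧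
      fractionalCoords (peel P a μ) ⊂ fractionalCoords μ := by
  set g : ι → ℝ := fun n => if n ∈ P then μ n else 1 - μ n
  obtain ⟨m, hm⟩ := hfrac
  obtain ⟨n₀, -, hn₀⟩ := exists_min_image univ g ⟨m, mem_univ m⟩
  have hg : ∀ n, 0 < g n := fun n => by
    by_cases hn : n ∈ P
    · simpa [g, hn] using (hμ n).1.lt_of_ne' (hP0 n hn)
    · simpa [g, hn] using (hμ n).2.lt_of_ne fun h => hn (hP1 n h)
  have hm1 : g m < 1 := by
    obtain ⟨hm_ne0, hm_ne1⟩ := mem_fractionalCoords.1 hm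
    have := (hμ m).1.lt_of_ne' hm_ne0
    have := (hμ m).2.lt_of_ne hm_ne1
    by_cases hmP : m ∈ P <;> simp only [g, hmP, if_true, if_false] <;> linarith
  have ha1 : g n₀ < 1 := (hn₀ m (mem_univ m)).trans_lt hm1
  refine ⟨g n₀, hg n₀, ha1, fun n => hn₀ n (mem_univ n), ?_⟩
  refine (ssubset_iff_of_subset (fractionalCoords_peel_subset ha1 hP1 hP0)).2 ⟨n₀, ?_, ?_⟩
  · have := hg n₀
    refine mem_fractionalCoords.2 ⟨fun h => ?_, fun h => ?_⟩ <;>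
      by_cases hn₀P : n₀ ∈ P <;> simp [g, hn₀P, h] at this ha1
  · rw [notMem_fractionalCoords, peel]
    by_cases hn₀P : n₀ ∈ P
    · simp [g, hn₀P]
    · right
      simp only [g, hn₀P, if_false, sub_zero, sub_sub_cancel] at ha1 ⊢
      exact div_self (by linarith : 0 < μ n₀).ne'

theorem exists_isMixtureOfSubsets (hμ : ∀ n, 0 ≤ μ n ∧ μ n ≤ 1) (hsum : ∑ n, μ n = L) :
    ∃ F ≤ max 1 #(fractionalCoords μ), IsMixtureOfSubsets L F μ := by
  induction hk : #(fractionalCoords μ) using Nat.strong_induction_on generalizing μ with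
  | _ k ih =>
  rcases (fractionalCoords μ).eq_empty_or_nonempty with h0 | hfrac
  · exact ⟨1, le_max_left _ _, .of_forall_eq_zero_or_one hsum fun n =>
      notMem_fractionalCoords.1 (h0 ▸ notMem_empty n)⟩
  obtain ⟨P, hP, hP1, hP0⟩ := exists_card_eq_of_sum_eq hμ hsum
  obtain ⟨a, ha0, ha1, haμ, hlt⟩ := exists_fractionalCoords_peel_ssubset hμ hP1 hP0 hfrac
  have hν := peel_bounds ha1 hμ haμ
  have hνsum := sum_peel ha1 hsum hP
  have hlt : #(fractionalCoords (peel P a μ)) < k := hk ▸ card_lt_card hlt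
  obtain ⟨F, hF, hmix⟩ := ih _ hlt hν hνsum rfl
  have hk0 : k ≠ 0 := hk ▸ hfrac.card_pos.ne'
  have hk1 : k ≠ 1 := hk ▸ card_fractionalCoords_ne_one hμ hsum
  have hν1 := card_fractionalCoords_ne_one hν hνsum
  exact ⟨F + 1, by omega, hmix.cons hP ha0 ha1 (eq_ite_add_peel ha1)⟩

theorem stmt9_general (N L : ℕ) (hN : 0 < N)
    (μ : Fin N → ℝ) (hμ : ∀ n, 0 ≤ μ n ∧ μ n ≤ 1)
    (hsum : ∑ n, μ n = (L : ℝ)) :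
    ∃ (F : ℕ), F ≤ N ∧
      ∃ (α : Fin F → ℝ) (P : Fin F → Finset (Fin N)),
        (∀ f, 0 < α f) ∧
        (∑ f, α f = 1) ∧
        (∀ f, (P f).card = L) ∧
        (∀ n, ∑ f ∈ univ.filter (fun f => n ∈ P f), α f = μ n) := by
  obtain ⟨F, hF, hmix⟩ := exists_isMixtureOfSubsets hμ hsum
  exact ⟨F, hF.trans (max_le hN ((card_le_univ _).trans_eq (Fintype.card_fin N))), hmix⟩

theorem stmt9 (N L : ℕ) (hN : 0 < N) (hL : 0 < L) (hLN : L ≤ N)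
    (μ : Fin N → ℝ) (hμ : ∀ n, 0 ≤ μ n ∧ μ n ≤ 1)
    (hsum : ∑ n, μ n = (L : ℝ)) :
    ∃ (F : ℕ), F ≤ N ∧
      ∃ (α : Fin F → ℝ) (P : Fin F → Finset (Fin N)),
        (∀ f, 0 < α f) ∧
        (∑ f, α f = 1) ∧
        (∀ f, (P f).card = L) ∧
        (∀ n, ∑ f ∈ univ.filter (fun f => n ∈ P f), α f = μ n) :=
  stmt9_general N L hN μ hμ hsum
end

section
/- Let N, L be positive integers with L < N, let s : Fin N → ℝ be strictly positive and sorted in nondecreasing order (s[1] ≤ s[2] ≤ ... ≤ s[N]). Suppose k* ∈ {1,...,N} and c = (L − N + k*) / (∑_{n=1}^{k*} s[n]) satisfy c ≤ 1/s[k*] and (if k* < N) 1/s[k*+1] < c and c > 0. Define μ[n] = c·s[n] for n ≤ k* and μ[n] = 1 for n > k*. Then ∑ n, μ[n] = L, 0 ≤ μ[n] ≤ 1 for all n, and μ minimizes max_n μ[n]/s[n] over all vectors ν with ∑ ν[n] = L and 0 ≤ ν[n] ≤ 1. -/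
/-!
Off a threshold set the load is capped at 1, and on it the ratio `ν i / s i` is bounded by
`M := ⨆ j, ν j / s j`, so any feasible `ν` has total load at most `M · ∑_{slow} s + #fast`.
The profile `μ` attains total `c · ∑_{slow} s + #fast = L` with every ratio at most `c`
(equal to `c` on the slow machines, and at most `c` on the fast ones because `1 / s[k+1] < c`);
hence `c ≤ M` for every feasible `ν`.
-/

open Finset

section CappedLoad

variable {ι : Type*} (p : ι → Prop) [DecidablePred p]

lemma ite_mul_one_mem_Icc {s : ι → ℝ} {c : ℝ} (hc : 0 ≤ c) (hs : ∀ i, 0 ≤ s i)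
    (hcap : ∀ i, p i → c * s i ≤ 1) (i : ι) : (if p i then c * s i else 1) ∈ Set.Icc 0 1 := by
  split_ifs with hi
  · exact ⟨mul_nonneg hc (hs i), hcap i hi⟩
  · exact ⟨zero_le_one, le_rfl⟩

variable [Fintype ι]

lemma le_ciSup_div_mul {ν s : ι → ℝ} (hs : ∀ i, 0 < s i) (i : ι) :
    ν i ≤ (⨆ j, ν j / s j) * s i :=
  (div_le_iff₀ (hs i)).mp <| le_ciSup (Set.finite_range fun j => ν j / s j).bddAbove i

lemma sum_le_ciSup_div_mul_sum_add_card {ν s : ι → ℝ} (hs : ∀ i, 0 < s i)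
    (hν : ∀ i, ν i ≤ 1) :
    ∑ i, ν i ≤ (⨆ j, ν j / s j) * ∑ i ∈ univ.filter p, s i + #(univ.filter (¬ p ·)) := by
  rw [← sum_filter_add_sum_filter_not univ p, mul_sum, card_eq_sum_ones, Nat.cast_sum]
  gcongr with i _ i _
  · exact le_ciSup_div_mul hs i
  · simpa using hν i

lemma le_ciSup_div_of_sum_eq {ν s : ι → ℝ} {c : ℝ} (hs : ∀ i, 0 < s i) (hν : ∀ i, ν i ≤ 1)
    (hp : ∃ i, p i)
    (hsum : ∑ i, ν i = c * ∑ i ∈ univ.filter p, s i + #(univ.filter (¬ p ·))) :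
    c ≤ ⨆ j, ν j / s j := by
  obtain ⟨i₀, hi₀⟩ := hp
  have hS : 0 < ∑ i ∈ univ.filter p, s i :=
    sum_pos (fun i _ => hs i) ⟨i₀, mem_filter.mpr ⟨mem_univ _, hi₀⟩⟩
  have := sum_le_ciSup_div_mul_sum_add_card p hs hν
  exact le_of_mul_le_mul_right (by linarith) hS

variable {p} {s : ι → ℝ} {c : ℝ}

lemma sum_ite_mul_one :
    ∑ i, (if p i then c * s i else 1) =
      c * ∑ i ∈ univ.filter p, s i + #(univ.filter (¬ p ·)) := by
  rw [sum_ite, mul_sum, sum_const, nsmul_one]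

lemma ciSup_ite_mul_one_div (hs : ∀ i, 0 < s i) (hp : ∃ i, p i)
    (hfast : ∀ i, ¬ p i → 1 / s i ≤ c) :
    ⨆ i, (if p i then c * s i else 1) / s i = c := by
  have hratio (i : ι) (hi : p i) : c * s i / s i = c := mul_div_cancel_right₀ c (hs i).ne'
  obtain ⟨i₀, hi₀⟩ := hp
  have : Nonempty ι := ⟨i₀⟩
  refine le_antisymm (ciSup_le fun i => ?_) ?_
  · split_ifs with hi
    exacts [(hratio i hi).le, hfast i hi]
  · calc c = (if p i₀ then c * s i₀ else 1) / s i₀ := by rw [if_pos hi₀, hratio i₀ hi₀]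
      _ ≤ _ := le_ciSup (f := fun i => (if p i then c * s i else 1) / s i)
          (Set.finite_range _).bddAbove i₀

end CappedLoad

lemma Fin.card_filter_not_le {N : ℕ} (k : Fin N) :
    (#(univ.filter (fun n : Fin N => ¬ n ≤ k)) : ℝ) = N - ((k : ℕ) + 1) := by
  have h := card_filter_add_card_filter_not (s := (univ : Finset (Fin N))) (· ≤ k)
  rw [filter_ge_eq_Iic, Fin.card_Iic, card_univ, Fintype.card_fin] at h
  have h' : ((k : ℕ) + 1 + #(univ.filter (fun n : Fin N => ¬ n ≤ k)) : ℝ) = N := by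
    exact_mod_cast h
  linarith

theorem stmt10_general (N L : ℕ)
    (s : Fin N → ℝ) (hs : ∀ n, 0 < s n)
    (hsort : ∀ m n : Fin N, m ≤ n → s m ≤ s n)
    (k : Fin N) (c : ℝ)
    (hc : c = ((L : ℝ) - N + ((k : ℕ) + 1)) / (∑ n ∈ univ.filter (fun n => n ≤ k), s n))
    (hcpos : 0 < c)
    (hck : c ≤ 1 / s k)
    (hck1 : ∀ n : Fin N, (n : ℕ) = (k : ℕ) + 1 → 1 / s n < c)
    (μ : Fin N → ℝ) (hμ : ∀ n, μ n = if n ≤ k then c * s n else 1) :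
    (∑ n, μ n = (L : ℝ)) ∧ (∀ n, 0 ≤ μ n ∧ μ n ≤ 1) ∧
    (∀ ν : Fin N → ℝ, (∑ n, ν n = (L : ℝ)) → (∀ n, 0 ≤ ν n ∧ ν n ≤ 1) →
      (⨆ n, μ n / s n) ≤ ⨆ n, ν n / s n) := by
  obtain rfl : μ = fun n => if n ≤ k then c * s n else 1 := funext hμ
  have hslow : ∃ n, n ≤ k := ⟨k, le_rfl⟩
  have hsum : c * ∑ n ∈ univ.filter (· ≤ k), s n + #(univ.filter (fun n => ¬ n ≤ k)) = L := by
    have hS : 0 < ∑ n ∈ univ.filter (· ≤ k), s n := sum_pos (fun n _ => hs n) ⟨k, by simp⟩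
    rw [Fin.card_filter_not_le, hc, div_mul_cancel₀ _ hS.ne']
    ring
  have hcap (n : Fin N) (hn : n ≤ k) : c * s n ≤ 1 :=
    (mul_le_mul_of_nonneg_left (hsort n k hn) hcpos.le).trans ((le_div_iff₀ (hs k)).mp hck)
  have hfast (n : Fin N) (hn : ¬ n ≤ k) : 1 / s n ≤ c := by
    have hkn : (k : ℕ) < n := not_le.mp hn
    let m : Fin N := ⟨k + 1, by omega⟩
    exact (one_div_le_one_div_of_le (hs m) (hsort m n (Fin.le_def.mpr hkn))).trans
      (hck1 m rfl).le
  refine ⟨sum_ite_mul_one.trans hsum,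
    fun n => ite_mul_one_mem_Icc _ hcpos.le (fun n => (hs n).le) hcap n, fun ν hν hνb => ?_⟩
  rw [ciSup_ite_mul_one_div hs hslow hfast]
  exact le_ciSup_div_of_sum_eq _ hs (fun n => (hνb n).2) hslow (hν.trans hsum.symm)

theorem stmt10 (N L : ℕ) (hN : 0 < N) (hL : 0 < L) (hLN : L < N)
    (s : Fin N → ℝ) (hs : ∀ n, 0 < s n)
    (hsort : ∀ m n : Fin N, m ≤ n → s m ≤ s n)
    (k : Fin N) (c : ℝ)
    (hc : c = ((L : ℝ) - N + ((k : ℕ) + 1)) / (∑ n ∈ univ.filter (fun n => n ≤ k), s n))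
    (hcpos : 0 < c)
    (hck : c ≤ 1 / s k)
    (hck1 : ∀ n : Fin N, (n : ℕ) = (k : ℕ) + 1 → 1 / s n < c)
    (μ : Fin N → ℝ) (hμ : ∀ n, μ n = if n ≤ k then c * s n else 1) :
    (∑ n, μ n = (L : ℝ)) ∧ (∀ n, 0 ≤ μ n ∧ μ n ≤ 1) ∧
    (∀ ν : Fin N → ℝ, (∑ n, ν n = (L : ℝ)) → (∀ n, 0 ≤ ν n ∧ ν n ≤ 1) →
      (⨆ n, μ n / s n) ≤ ⨆ n, ν n / s n) :=
  stmt10_general N L s hs hsort k c hc hcpos hck hck1 μ hμ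
end

section
/- Let N, L be positive integers, μ : Fin N → ℝ with 0 ≤ μ[n] for all n, ∑ μ[n] = L, and μ[n] ≤ (∑_i μ[i])/L for all n. Assume at least L + 1 indices have μ[n] > 0. Let n₀ be an index minimizing μ among indices with μ[n] > 0, let S be a set of L − 1 indices with the largest values of μ not including n₀, and let n₁ ∉ S ∪ {n₀} be an index maximizing μ outside S ∪ {n₀}. Set α = min((∑ μ)/L − μ[n₁], μ[n₀]) and define μ'[n] = μ[n] − α for n ∈ S ∪ {n₀} and μ'[n] = μ[n] otherwise. Then μ' ≥ 0, ∑ μ'[n] = ∑ μ[n] − Lα, and μ'[n] ≤ (∑_i μ'[i])/L for all n. -/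
open Finset

theorem stmt15 (N L : ℕ) (hN : 0 < N) (hL : 0 < L)
    (μ : Fin N → ℝ) (hμ : ∀ n, 0 ≤ μ n)
    (hsum : ∑ n, μ n = (L : ℝ))
    (hbound : ∀ n, μ n ≤ (∑ i, μ i) / L)
    (hpos : L + 1 ≤ (univ.filter (fun n => 0 < μ n)).card)
    (n₀ : Fin N) (hn₀pos : 0 < μ n₀)
    (hn₀min : ∀ m, 0 < μ m → μ n₀ ≤ μ m)
    (S : Finset (Fin N)) (hScard : S.card = L - 1) (hn₀S : n₀ ∉ S)
    (hStop : ∀ x ∈ S, ∀ m, m ∉ S → m ≠ n₀ → μ m ≤ μ x)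
    (n₁ : Fin N) (hn₁S : n₁ ∉ S) (hn₁ : n₁ ≠ n₀)
    (hn₁max : ∀ m, m ∉ S → m ≠ n₀ → μ m ≤ μ n₁)
    (α : ℝ) (hα : α = min ((∑ i, μ i) / L - μ n₁) (μ n₀))
    (μ' : Fin N → ℝ)
    (hμ' : ∀ n, μ' n = if n ∈ insert n₀ S then μ n - α else μ n) :
    (∀ n, 0 ≤ μ' n) ∧
    (∑ n, μ' n = ∑ n, μ n - L * α) ∧
    (∀ n, μ' n ≤ (∑ i, μ' i) / L) := by
  have hLR : (0:ℝ) < L := by exact_mod_cast hL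
  have hdiv : (∑ i, μ i) / L = 1 := by rw [hsum]; field_simp
  have hbound1 : ∀ n, μ n ≤ 1 := fun n => hdiv ▸ hbound n
  have hcard : (insert n₀ S).card = L := by
    rw [card_insert_of_notMem hn₀S, hScard]; omega
  obtain ⟨m, hmpos, hmnot⟩ : ∃ m, 0 < μ m ∧ m ∉ insert n₀ S := by
    by_contra h
    push_neg at h
    have hsub : (univ.filter (fun n => 0 < μ n)) ⊆ insert n₀ S := by
      intro x hx; simp only [mem_filter, mem_univ, true_and] at hx; exact h x hx
    have := card_le_card hsub
    rw [hcard] at this; omega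
  simp only [mem_insert, not_or] at hmnot
  have hSpos : ∀ x ∈ S, μ n₀ ≤ μ x := fun x hx =>
    le_trans (hn₀min m hmpos) (hStop x hx m hmnot.2 hmnot.1)
  have hα0 : 0 ≤ α := by
    rw [hα]
    exact le_min (by linarith [hbound1 n₁]) (le_of_lt hn₀pos)
  have hαle : ∀ n ∈ insert n₀ S, α ≤ μ n := by
    intro n hn
    rcases mem_insert.mp hn with h | h
    · rw [h, hα]; exact min_le_right _ _
    · exact le_trans (le_trans (hα ▸ min_le_right _ _) (hSpos n h)) le_rfl
  have h1 : ∀ n, 0 ≤ μ' n := by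
    intro n
    rw [hμ']
    split
    · linarith [hαle n (by assumption)]
    · exact hμ n
  have hμ'alt : ∀ n, μ' n = μ n - (if n ∈ insert n₀ S then α else 0) := by
    intro n; rw [hμ']; split <;> ring
  have h2 : ∑ n, μ' n = ∑ n, μ n - L * α := by
    simp only [hμ'alt, Finset.sum_sub_distrib]
    congr 1
    rw [Finset.sum_ite_mem, Finset.univ_inter, Finset.sum_const, hcard]
    simp [mul_comm]
  refine ⟨h1, h2, ?_⟩
  have hsum' : (∑ i, μ' i) / L = 1 - α := by
    rw [h2, hsum]; field_simp
  intro n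
  rw [hsum', hμ']
  split
  · linarith [hbound1 n]
  · rename_i hn
    simp only [mem_insert, not_or] at hn
    have := hn₁max n hn.2 hn.1
    have hn₁le : μ n₁ ≤ 1 - α := by
      have : α ≤ (∑ i, μ i) / L - μ n₁ := hα ▸ min_le_left _ _
      rw [hdiv] at this; linarith
    linarith
end

section
/- Let N, L be positive integers with L ≤ N, s : Fin N → ℝ strictly positive, σ : Fin N → ℝ strictly positive, 0 < L ≤ ∑ σ[n]. Let c* be the minimum of max_n μ[n]/s[n] over {μ | ∑ μ[n] = L, 0 ≤ μ[n] ≤ σ[n]}. Then c* ≥ L / (∑_n s[n]), with equality if and only if the vector μ[n] = (L/∑_i s[i])·s[n] satisfies μ[n] ≤ σ[n] for all n. -/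
open Finset

theorem stmt18 (N L : ℕ) (hN : 0 < N) (hL : 0 < L) (hLN : L ≤ N)
    (s σ : Fin N → ℝ) (hs : ∀ n, 0 < s n) (hσ : ∀ n, 0 < σ n)
    (hL2 : (L : ℝ) ≤ ∑ n, σ n)
    (μstar : Fin N → ℝ)
    (hfeas : (∑ n, μstar n = (L : ℝ)) ∧ ∀ n, 0 ≤ μstar n ∧ μstar n ≤ σ n)
    (hmin : ∀ ν : Fin N → ℝ, (∑ n, ν n = (L : ℝ)) → (∀ n, 0 ≤ ν n ∧ ν n ≤ σ n) →
      (⨆ n, μstar n / s n) ≤ ⨆ n, ν n / s n)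
    (cstar : ℝ) (hc : cstar = ⨆ n, μstar n / s n) :
    (L : ℝ) / (∑ n, s n) ≤ cstar ∧
    (cstar = (L : ℝ) / (∑ n, s n) ↔
      ∀ n, ((L : ℝ) / (∑ i, s i)) * s n ≤ σ n) := by
  have hNE : Nonempty (Fin N) := ⟨⟨0, hN⟩⟩
  have hS : 0 < ∑ n, s n := Finset.sum_pos (fun i _ => hs i) ⟨⟨0, hN⟩, mem_univ _⟩
  have hbdd : BddAbove (Set.range fun n => μstar n / s n) :=
    Set.Finite.bddAbove (Set.finite_range _)
  have hle : ∀ n, μstar n ≤ cstar * s n := by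
    intro n
    have h1 : μstar n / s n ≤ cstar := hc ▸ le_ciSup hbdd n
    calc μstar n = (μstar n / s n) * s n := (div_mul_cancel₀ (μstar n) (hs n).ne').symm
    _ ≤ cstar * s n := mul_le_mul_of_nonneg_right h1 (hs n).le
  have hlow : (L : ℝ) / (∑ n, s n) ≤ cstar := by
    rw [div_le_iff₀ hS]
    calc (L : ℝ) = ∑ n, μstar n := hfeas.1.symm
    _ ≤ ∑ n, cstar * s n := Finset.sum_le_sum fun n _ => hle n
    _ = cstar * ∑ n, s n := by rw [Finset.mul_sum]
  refine ⟨hlow, ?_, ?_⟩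
  · intro heq n
    -- equality in the sum forces μstar n = cstar * s n for all n
    have hsumeq : ∑ n, μstar n = ∑ n, cstar * s n := by
      rw [hfeas.1, ← Finset.mul_sum, heq, div_mul_cancel₀ _ hS.ne']
    have hall : ∀ n ∈ univ, μstar n = cstar * s n :=
      (Finset.sum_eq_sum_iff_of_le fun n _ => hle n).mp hsumeq
    have := hall n (mem_univ n)
    calc ((L : ℝ) / (∑ i, s i)) * s n = cstar * s n := by rw [heq]
    _ = μstar n := (hall n (mem_univ n)).symm
    _ ≤ σ n := (hfeas.2 n).2
  · intro hfeasp
    set c : ℝ := (L : ℝ) / (∑ n, s n) with hcdef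
    have hcpos : 0 < c := div_pos (by exact_mod_cast hL) hS
    have hsum : ∑ n, c * s n = (L : ℝ) := by
      rw [← Finset.mul_sum, div_mul_cancel₀ _ hS.ne']
    have hbnd : ∀ n, 0 ≤ c * s n ∧ c * s n ≤ σ n := fun n =>
      ⟨mul_nonneg hcpos.le (hs n).le, hfeasp n⟩
    have h2 : cstar ≤ ⨆ n, (c * s n) / s n := hc ▸ hmin _ hsum hbnd
    have h3 : (⨆ n, (c * s n) / s n) = c := by
      have : ∀ n : Fin N, (c * s n) / s n = c := fun n =>
        mul_div_cancel_right₀ c (hs n).ne'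
      simp only [this, ciSup_const]
    exact le_antisymm (h3 ▸ h2) hlow
end
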